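/- arXiv:2511.06510 — 5 statements merged into one kernel-verified Lean document; each statement's English description precedes it below -/
import Mathlib

section
/- Let α > 0, let θ_1, …, θ_L be i.i.d. real random variables uniformly distributed on [−α, α], let h_1, …, h_L be fixed complex numbers, let I be a finite index set with fixed complex numbers h̃_{i,l} for i ∈ I and l = 1, …, L, and let σ² > 0. Then E[|Σ_l e^{iθ_l} h_l|²] / ( Σ_{i∈I} E[|Σ_l e^{iθ_l} h̃_{i,l}|²] + σ² ) = ( ν̃|Σ_l h_l|² + (1−ν̃)Σ_l |h_l|² ) / ( Σ_{i∈I} ( ν̃|Σ_l h̃_{i,l}|² + (1−ν̃)Σ_l |h̃_{i,l}|² ) + σ² ), where ν̃ = (sin(α)/α)². -/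
/-!
Expanding `|∑ₗ e^{iθₗ} hₗ|²` gives `∑ₗ,ₘ hₗ h̄ₘ e^{iθₗ} e^{-iθₘ}`. The diagonal terms have
expectation `1`; by independence the off-diagonal ones have expectation `|E e^{iθ}|²`, and
`E e^{iθ} = sin α / α` for `θ ~ U[-α, α]`. Hence every expected received power equals
`ν̃ |∑ₗ hₗ|² + (1 - ν̃) ∑ₗ |hₗ|²`, separately in the numerator and in each interference term.
-/

open MeasureTheory Set ProbabilityTheory

noncomputable def uniformIcc (a : ℝ) : Measure ℝ :=
  (volume (Icc (-a) a))⁻¹ • volume.restrict (Icc (-a) a)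

open ComplexConjugate

lemma integral_uniformIcc {E : Type*} [NormedAddCommGroup E] [NormedSpace ℝ E] {a : ℝ}
    (ha : 0 < a) (f : ℝ → E) :
    ∫ x, f x ∂uniformIcc a = (2 * a)⁻¹ • ∫ x in -a..a, f x := by
  rw [uniformIcc, integral_smul_measure, Real.volume_Icc, sub_neg_eq_add, ← two_mul,
    ENNReal.toReal_inv, ENNReal.toReal_ofReal (by positivity), integral_Icc_eq_integral_Ioc,
    intervalIntegral.integral_of_le (by linarith)]

lemma integral_exp_mul_I_neg_to_self (a : ℝ) :
    ∫ x in -a..a, Complex.exp (x * Complex.I) = 2 * Real.sin a := by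
  simp_rw [mul_comm _ Complex.I]
  rw [integral_exp_mul_complex Complex.I_ne_zero]
  push_cast
  rw [Complex.sin, div_eq_iff Complex.I_ne_zero]
  ring_nf
  rw [Complex.I_sq]
  ring

lemma integral_exp_mul_I_uniformIcc {a : ℝ} (ha : 0 < a) :
    ∫ x, Complex.exp (x * Complex.I) ∂uniformIcc a = (Real.sin a / a : ℝ) := by
  rw [integral_uniformIcc ha, integral_exp_mul_I_neg_to_self, Complex.real_smul]
  push_cast
  field_simp

lemma sum_sum_mul_conj_mul_ite {ι : Type*} [Fintype ι] [DecidableEq ι] (g : ι → ℂ) (a : ℂ) :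
    ∑ i, ∑ j, g i * conj (g j) * (if i = j then 1 else a)
      = a * (‖∑ i, g i‖ : ℂ) ^ 2 + (1 - a) * ∑ i, (‖g i‖ : ℂ) ^ 2 := by
  have hsplit : ∀ i j, g i * conj (g j) * (if i = j then 1 else a)
      = a * (g i * conj (g j)) + if i = j then (1 - a) * (g i * conj (g j)) else 0 := by
    intro i j
    split_ifs <;> ring
  simp only [hsplit, Finset.sum_add_distrib, ← Finset.mul_sum, Finset.sum_ite_eq,
    Finset.mem_univ, if_true, Complex.mul_conj']
  rw [← map_sum, ← Finset.sum_mul, Complex.mul_conj']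

section PairwiseIndependent

variable {Ω ι : Type*} [MeasurableSpace Ω] {μ : Measure Ω} [IsProbabilityMeasure μ]
  {X : ι → Ω → ℂ} {c : ℂ}

lemma integral_mul_conj_of_pairwise_indepFun (hX : ∀ i, AEStronglyMeasurable (X i) μ)
    (hindep : Pairwise fun i j => X i ⟂ᵢ[μ] X j) (hnorm : ∀ i, ∀ᵐ ω ∂μ, ‖X i ω‖ = 1)
    (hmean : ∀ i, ∫ ω, X i ω ∂μ = c) [DecidableEq ι] (i j : ι) :
    ∫ ω, X i ω * conj (X j ω) ∂μ = if i = j then 1 else (‖c‖ : ℂ) ^ 2 := by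
  split_ifs with hij
  · subst hij
    have hunit : (fun ω => X i ω * conj (X i ω)) =ᵐ[μ] fun _ => 1 :=
      (hnorm i).mono fun ω hω => by simp [Complex.mul_conj', hω]
    simp [integral_congr_ae hunit]
  · have hconj : X i ⟂ᵢ[μ] (conj ∘ X j) :=
      (hindep hij).comp measurable_id Complex.continuous_conj.measurable
    simpa only [Function.comp_apply, integral_conj, hmean, Complex.mul_conj'] using
      hconj.integral_fun_mul_eq_mul_integral (hX i)
        (Complex.continuous_conj.comp_aestronglyMeasurable (hX j))

theorem integral_norm_sum_mul_sq_of_pairwise_indepFun [Fintype ι]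
    (hX : ∀ i, AEStronglyMeasurable (X i) μ)
    (hindep : Pairwise fun i j => X i ⟂ᵢ[μ] X j) (hnorm : ∀ i, ∀ᵐ ω ∂μ, ‖X i ω‖ = 1)
    (hmean : ∀ i, ∫ ω, X i ω ∂μ = c) (g : ι → ℂ) :
    ∫ ω, ‖∑ i, X i ω * g i‖ ^ 2 ∂μ
      = ‖c‖ ^ 2 * ‖∑ i, g i‖ ^ 2 + (1 - ‖c‖ ^ 2) * ∑ i, ‖g i‖ ^ 2 := by
  classical
  have hint : ∀ i j, Integrable (fun ω => g i * conj (g j) * (X i ω * conj (X j ω))) μ := by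
    intro i j
    refine Integrable.const_mul (Integrable.of_bound ((hX i).mul
      (Complex.continuous_conj.comp_aestronglyMeasurable (hX j))) 1 ?_) _
    filter_upwards [hnorm i, hnorm j] with ω hi hj
    simp [hi, hj]
  have hexpand : ∀ ω, ((‖∑ i, X i ω * g i‖ ^ 2 : ℝ) : ℂ)
      = ∑ i, ∑ j, g i * conj (g j) * (X i ω * conj (X j ω)) := by
    intro ω
    rw [Complex.ofReal_pow, ← Complex.mul_conj', map_sum, Finset.sum_mul_sum]
    refine Finset.sum_congr rfl fun i _ => Finset.sum_congr rfl fun j _ => ?_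
    rw [map_mul]
    ring
  apply Complex.ofReal_injective
  rw [← integral_complex_ofReal]
  simp only [hexpand]
  rw [integral_finsetSum _ fun i _ => integrable_finsetSum _ fun j _ => hint i j]
  simp only [integral_finsetSum _ fun j _ => hint _ j, integral_const_mul,
    integral_mul_conj_of_pairwise_indepFun hX hindep hnorm hmean, sum_sum_mul_conj_mul_ite]
  norm_cast

end PairwiseIndependent

lemma integral_exp_mul_I_of_map_eq_uniformIcc {Ω : Type*} [MeasurableSpace Ω] {μ : Measure Ω}
    {α : ℝ} (hα : 0 < α) {θ : Ω → ℝ} (hθ : AEMeasurable θ μ) (hmap : μ.map θ = uniformIcc α) :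
    ∫ ω, Complex.exp (θ ω * Complex.I) ∂μ = (Real.sin α / α : ℝ) := by
  rw [← integral_exp_mul_I_uniformIcc hα, ← hmap, integral_map hθ]
  exact (by fun_prop : Continuous fun x : ℝ => Complex.exp (x * Complex.I)).aestronglyMeasurable

theorem sinr_closed_form_instantaneous_general
    {Ω : Type*} [MeasurableSpace Ω] (μ : Measure Ω) [IsProbabilityMeasure μ]
    (α : ℝ) (hα : 0 < α) (L : ℕ) (θ : Fin L → Ω → ℝ)
    (hθ : ∀ l, AEMeasurable (θ l) μ)
    (hindep : iIndepFun θ μ)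
    (hmap : ∀ l, μ.map (θ l) = uniformIcc α)
    (h : Fin L → ℂ)
    {I : Type*} [Fintype I] (ht : I → Fin L → ℂ)
    (σ2 : ℝ) :
    (∫ ω, ‖∑ l, Complex.exp ((θ l ω : ℂ) * Complex.I) * h l‖ ^ 2 ∂μ)
        / ((∑ i, ∫ ω, ‖∑ l, Complex.exp ((θ l ω : ℂ) * Complex.I) * ht i l‖ ^ 2 ∂μ) + σ2)
      = ((Real.sin α / α) ^ 2 * ‖∑ l, h l‖ ^ 2
            + (1 - (Real.sin α / α) ^ 2) * ∑ l, ‖h l‖ ^ 2)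
        / ((∑ i, ((Real.sin α / α) ^ 2 * ‖∑ l, ht i l‖ ^ 2
            + (1 - (Real.sin α / α) ^ 2) * ∑ l, ‖ht i l‖ ^ 2)) + σ2) := by
  have hcont : Continuous fun x : ℝ => Complex.exp (x * Complex.I) := by fun_prop
  have hmoment : ∀ g : Fin L → ℂ,
      ∫ ω, ‖∑ l, Complex.exp ((θ l ω : ℂ) * Complex.I) * g l‖ ^ 2 ∂μ
        = (Real.sin α / α) ^ 2 * ‖∑ l, g l‖ ^ 2
          + (1 - (Real.sin α / α) ^ 2) * ∑ l, ‖g l‖ ^ 2 := by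
    intro g
    have hsinc : ‖((Real.sin α / α : ℝ) : ℂ)‖ ^ 2 = (Real.sin α / α) ^ 2 := by
      rw [Complex.norm_real, Real.norm_eq_abs, sq_abs]
    rw [← hsinc]
    exact integral_norm_sum_mul_sq_of_pairwise_indepFun
      (fun l => hcont.comp_aestronglyMeasurable (hθ l).aestronglyMeasurable)
      (fun l m hlm => (hindep.indepFun hlm).comp hcont.measurable hcont.measurable)
      (fun l => ae_of_all _ fun ω => Complex.norm_exp_ofReal_mul_I _)
      (fun l => integral_exp_mul_I_of_map_eq_uniformIcc hα (hθ l) (hmap l)) g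
  simp only [hmoment]

/-- Closed form of the instantaneous downlink SINR under i.i.d. uniform phase
misalignments `θ_l ~ U[-α, α]`:
`E[|Σ_l e^{iθ_l} h_l|²] / (Σ_i E[|Σ_l e^{iθ_l} h̃_{i,l}|²] + σ²)` equals
`(ν̃ |Σ_l h_l|² + (1-ν̃) Σ_l |h_l|²) / (Σ_i (ν̃ |Σ_l h̃_{i,l}|² + (1-ν̃) Σ_l |h̃_{i,l}|²) + σ²)`
with `ν̃ = (sin α / α)²`. -/
theorem sinr_closed_form_instantaneous
    {Ω : Type*} [MeasurableSpace Ω] (μ : Measure Ω) [IsProbabilityMeasure μ]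
    (α : ℝ) (hα : 0 < α) (L : ℕ) (θ : Fin L → Ω → ℝ)
    (hθ : ∀ l, AEMeasurable (θ l) μ)
    (hindep : iIndepFun θ μ)
    (hmap : ∀ l, μ.map (θ l) = uniformIcc α)
    (h : Fin L → ℂ)
    {I : Type*} [Fintype I] (ht : I → Fin L → ℂ)
    (σ2 : ℝ) (hσ2 : 0 < σ2) :
    (∫ ω, ‖∑ l, Complex.exp ((θ l ω : ℂ) * Complex.I) * h l‖ ^ 2 ∂μ)
        / ((∑ i, ∫ ω, ‖∑ l, Complex.exp ((θ l ω : ℂ) * Complex.I) * ht i l‖ ^ 2 ∂μ) + σ2)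
      = ((Real.sin α / α) ^ 2 * ‖∑ l, h l‖ ^ 2
            + (1 - (Real.sin α / α) ^ 2) * ∑ l, ‖h l‖ ^ 2)
        / ((∑ i, ((Real.sin α / α) ^ 2 * ‖∑ l, ht i l‖ ^ 2
            + (1 - (Real.sin α / α) ^ 2) * ∑ l, ‖ht i l‖ ^ 2)) + σ2) :=
  sinr_closed_form_instantaneous_general μ α hα L θ hθ hindep hmap h ht σ2
end

section
/- Let α > 0, let θ_1, …, θ_L be i.i.d. real random variables uniformly distributed on [−α, α], and let X_1, …, X_L be complex random variables with E[|X_l|²] < ∞ such that the random vector (θ_1, …, θ_L) is independent of the random vector (X_1, …, X_L). Then E[ |Σ_{l=1}^L e^{iθ_l} X_l|² ] = ν̃ · E[ |Σ_{l=1}^L X_l|² ] + (1 − ν̃) · Σ_{l=1}^L E[|X_l|²], where ν̃ = (sin(α)/α)². -/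
/-!
Expanding the square, `E|∑ e^{iθ_l} X_l|² = ∑_{l,m} E[e^{iθ_l} conj e^{iθ_m}] · E[X_l conj X_m]`
by independence of the phases from the channel. The phase factor is `1` on the diagonal and,
off it, the product of two values of the characteristic function of `U[-α, α]` at `1`, each equal
to `sin α / α`. Computing with complex-valued integrals avoids taking real parts of cross terms.
-/

open MeasureTheory Set ProbabilityTheory

open Complex ComplexConjugate

lemma integral_cexp_mul_I_uniformIcc {α : ℝ} (hα : 0 < α) :
    ∫ t, cexp (t * I) ∂uniformIcc α = (Real.sin α / α : ℝ) := by
  have hI : ∫ t in -α..α, cexp (I * t) = 2 * Real.sin α := by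
    rw [integral_exp_mul_complex I_ne_zero]
    push_cast
    rw [mul_comm I, mul_comm I, exp_mul_I, exp_mul_I, cos_neg, sin_neg]
    field_simp
    ring
  rw [uniformIcc, integral_smul_measure, Real.volume_Icc, integral_Icc_eq_integral_Ioc,
    ← intervalIntegral.integral_of_le (by linarith)]
  simp_rw [mul_comm _ I]
  rw [hI, ENNReal.toReal_inv, ENNReal.toReal_ofReal (by linarith), real_smul]
  push_cast
  field_simp
  ring

lemma ofReal_norm_sum_sq {ι : Type*} [Fintype ι] (z : ι → ℂ) :
    ((‖∑ i, z i‖ ^ 2 : ℝ) : ℂ) = ∑ i, ∑ j, z i * conj (z j) := by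
  rw [ofReal_pow, ← mul_conj', map_sum, Finset.sum_mul_sum]

lemma sum_sum_ite_mul {ι : Type*} [Fintype ι] [DecidableEq ι] (ν : ℂ) (c : ι → ι → ℂ) :
    ∑ i, ∑ j, (if i = j then 1 else ν) * c i j
      = ν * ∑ i, ∑ j, c i j + (1 - ν) * ∑ i, c i i := by
  have h : ∀ i j, (if i = j then 1 else ν) * c i j
      = ν * c i j + if i = j then (1 - ν) * c i j else 0 := by
    intro i j
    split_ifs <;> ring
  simp only [h, Finset.sum_add_distrib, Finset.sum_ite_eq, Finset.mem_univ, if_true,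
    Finset.mul_sum]

section

variable {Ω ι : Type*} [MeasurableSpace Ω] {μ : Measure Ω}

lemma MeasureTheory.MemLp.integrable_mul_conj {f g : Ω → ℂ} (hf : MemLp f 2 μ)
    (hg : MemLp g 2 μ) : Integrable (fun ω => f ω * conj (g ω)) μ :=
  hf.integrable_mul hg.star

lemma MeasureTheory.MemLp.cexp_mul_I_mul {p : ENNReal} {θ : Ω → ℝ} {f : Ω → ℂ}
    (hθ : AEMeasurable θ μ) (hf : MemLp f p μ) :
    MemLp (fun ω => cexp (θ ω * I) * f ω) p μ :=
  hf.of_le (((by fun_prop : Measurable fun t : ℝ => cexp (t * I)).comp_aemeasurable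
    hθ).aestronglyMeasurable.mul hf.1) (.of_forall fun ω => by simp [norm_exp_ofReal_mul_I])

lemma ofReal_integral_norm_sq (f : Ω → ℂ) :
    ((∫ ω, ‖f ω‖ ^ 2 ∂μ : ℝ) : ℂ) = ∫ ω, f ω * conj (f ω) ∂μ := by
  rw [← integral_complex_ofReal]
  simp_rw [mul_conj', ofReal_pow]

lemma ofReal_integral_norm_sum_sq [Fintype ι] {W : ι → Ω → ℂ} (hW : ∀ i, MemLp (W i) 2 μ) :
    ((∫ ω, ‖∑ i, W i ω‖ ^ 2 ∂μ : ℝ) : ℂ) = ∑ i, ∑ j, ∫ ω, W i ω * conj (W j ω) ∂μ := by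
  rw [← integral_complex_ofReal]
  simp_rw [ofReal_norm_sum_sq]
  rw [integral_finsetSum _ fun i _ => integrable_finsetSum _ fun j _ =>
    (hW i).integrable_mul_conj (hW j)]
  exact Finset.sum_congr rfl fun i _ => integral_finsetSum _ fun j _ =>
    (hW i).integrable_mul_conj (hW j)

lemma integral_cexp_mul_I_of_map_eq_uniformIcc {α : ℝ} (hα : 0 < α) {θ : Ω → ℝ}
    (hθ : AEMeasurable θ μ) (hmap : μ.map θ = uniformIcc α) :
    ∫ ω, cexp (θ ω * I) ∂μ = (Real.sin α / α : ℝ) := by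
  rw [← integral_map (f := fun t : ℝ => cexp (t * I)) hθ
    (by fun_prop : Measurable _).aestronglyMeasurable, hmap, integral_cexp_mul_I_uniformIcc hα]

lemma integral_cexp_mul_I_mul_conj_self [IsProbabilityMeasure μ] (θ : Ω → ℝ) :
    ∫ ω, cexp (θ ω * I) * conj (cexp (θ ω * I)) ∂μ = 1 := by
  simp [mul_conj', norm_exp_ofReal_mul_I]

namespace ProbabilityTheory

lemma IndepFun.integral_phase_mul_conj_phase {T : Ω → ι → ℝ} {V : Ω → ι → ℂ}
    (hTV : IndepFun T V μ) (hT : AEMeasurable T μ) (hV : AEMeasurable V μ) (i j : ι) :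
    ∫ ω, cexp (T ω i * I) * V ω i * conj (cexp (T ω j * I) * V ω j) ∂μ
      = (∫ ω, cexp (T ω i * I) * conj (cexp (T ω j * I)) ∂μ)
        * ∫ ω, V ω i * conj (V ω j) ∂μ := by
  simp_rw [map_mul, mul_mul_mul_comm _ (V _ i)]
  exact hTV.integral_fun_comp_mul_comp hT hV
    (f := fun t => cexp (t i * I) * conj (cexp (t j * I)))
    (g := fun v => v i * conj (v j)) (by fun_prop : Measurable _).aestronglyMeasurable
    (by fun_prop : Measurable _).aestronglyMeasurable

lemma IndepFun.integral_cexp_mul_I_mul_conj {α : ℝ} (hα : 0 < α) {θ₁ θ₂ : Ω → ℝ}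
    (h : IndepFun θ₁ θ₂ μ) (h₁ : AEMeasurable θ₁ μ) (h₂ : AEMeasurable θ₂ μ)
    (hmap₁ : μ.map θ₁ = uniformIcc α) (hmap₂ : μ.map θ₂ = uniformIcc α) :
    ∫ ω, cexp (θ₁ ω * I) * conj (cexp (θ₂ ω * I)) ∂μ = ((Real.sin α / α) ^ 2 : ℝ) := by
  rw [h.integral_fun_comp_mul_comp h₁ h₂ (f := fun t : ℝ => cexp (t * I))
    (g := fun t : ℝ => conj (cexp (t * I))) (by fun_prop : Measurable _).aestronglyMeasurable
    (by fun_prop : Measurable _).aestronglyMeasurable, integral_conj,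
    integral_cexp_mul_I_of_map_eq_uniformIcc hα h₁ hmap₁,
    integral_cexp_mul_I_of_map_eq_uniformIcc hα h₂ hmap₂, conj_ofReal]
  push_cast
  ring

lemma iIndepFun.integral_cexp_mul_I_mul_conj [IsProbabilityMeasure μ] [DecidableEq ι] {α : ℝ}
    (hα : 0 < α) {θ : ι → Ω → ℝ} (hθ : ∀ i, AEMeasurable (θ i) μ) (hindep : iIndepFun θ μ)
    (hmap : ∀ i, μ.map (θ i) = uniformIcc α) (i j : ι) :
    ∫ ω, cexp (θ i ω * I) * conj (cexp (θ j ω * I)) ∂μ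
      = if i = j then (1 : ℂ) else ((Real.sin α / α) ^ 2 : ℝ) := by
  split_ifs with hij
  · rw [hij, integral_cexp_mul_I_mul_conj_self]
  · exact (hindep.indepFun hij).integral_cexp_mul_I_mul_conj hα (hθ i) (hθ j) (hmap i) (hmap j)

end ProbabilityTheory

end

/-- If `θ_1, …, θ_L` are i.i.d. `~ U[-α, α]` with `α > 0`, and `X_1, …, X_L` are
square-integrable complex random variables with `(θ_1, …, θ_L)` independent of
`(X_1, …, X_L)`, then
`E[|Σ_l e^{iθ_l} X_l|²] = ν̃ E[|Σ_l X_l|²] + (1 - ν̃) Σ_l E[|X_l|²]` with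
`ν̃ = (sin α / α)²`. -/
theorem expectation_sq_norm_sum_phase_random
    {Ω : Type*} [MeasurableSpace Ω] (μ : Measure Ω) [IsProbabilityMeasure μ]
    (α : ℝ) (hα : 0 < α) (L : ℕ) (θ : Fin L → Ω → ℝ)
    (hθ : ∀ l, AEMeasurable (θ l) μ)
    (hindep : iIndepFun θ μ)
    (hmap : ∀ l, μ.map (θ l) = uniformIcc α)
    (X : Fin L → Ω → ℂ)
    (hX : ∀ l, MemLp (X l) 2 μ)
    (hindepX : IndepFun (fun ω l => θ l ω) (fun ω l => X l ω) μ) :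
    ∫ ω, ‖∑ l, Complex.exp ((θ l ω : ℂ) * Complex.I) * X l ω‖ ^ 2 ∂μ
      = (Real.sin α / α) ^ 2 * ∫ ω, ‖∑ l, X l ω‖ ^ 2 ∂μ
        + (1 - (Real.sin α / α) ^ 2) * ∑ l, ∫ ω, ‖X l ω‖ ^ 2 ∂μ := by
  have hθvec : AEMeasurable (fun ω l => θ l ω) μ := aemeasurable_pi_lambda _ hθ
  have hXvec : AEMeasurable (fun ω l => X l ω) μ :=
    aemeasurable_pi_lambda _ fun l => (hX l).aestronglyMeasurable.aemeasurable
  apply ofReal_injective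
  rw [ofReal_add, ofReal_mul, ofReal_mul, ofReal_sum, ofReal_sub, ofReal_one,
    ofReal_integral_norm_sum_sq fun l => (hX l).cexp_mul_I_mul (hθ l),
    ofReal_integral_norm_sum_sq hX]
  simp_rw [hindepX.integral_phase_mul_conj_phase hθvec hXvec,
    hindep.integral_cexp_mul_I_mul_conj hα hθ hmap, ofReal_integral_norm_sq]
  exact sum_sum_ite_mul _ _
end

section
/- For all complex numbers s_1, s_2, s_3, the 4×4 code matrix X = (1/√3)·[[s_1, 0, s_2, −s_3],[0, s_1, conj(s_3), conj(s_2)],[−conj(s_2), −s_3, conj(s_1), 0],[conj(s_3), −s_2, 0, conj(s_1)]] satisfies X X^H = ((|s_1|² + |s_2|² + |s_3|²)/3) · I_4. In particular, if |s_1| = |s_2| = |s_3| = 1 then X is unitary. -/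
open Matrix Complex

/-- The rate-3/4 orthogonal space-time code matrix of Eq. (25). -/
noncomputable def rate34Code (s1 s2 s3 : ℂ) : Matrix (Fin 4) (Fin 4) ℂ :=
  ((Real.sqrt 3 : ℂ))⁻¹ •
    !![s1, 0, s2, -s3;
       0, s1, (starRingEnd ℂ) s3, (starRingEnd ℂ) s2;
       -((starRingEnd ℂ) s2), -s3, (starRingEnd ℂ) s1, 0;
       (starRingEnd ℂ) s3, -s2, 0, (starRingEnd ℂ) s1]

theorem Matrix.ofReal_smul_mul_conjTranspose {m n : Type*} [Fintype n]
    (r : ℝ) (A : Matrix m n ℂ) :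
    ((r : ℂ) • A) * ((r : ℂ) • A)ᴴ = ((r ^ 2 : ℝ) : ℂ) • (A * Aᴴ) := by
  rw [conjTranspose_smul, Matrix.smul_mul, Matrix.mul_smul, smul_smul, star_def, conj_ofReal,
    ← ofReal_mul, sq]

def rate34Design (s1 s2 s3 : ℂ) : Matrix (Fin 4) (Fin 4) ℂ :=
  !![s1, 0, s2, -s3;
     0, s1, (starRingEnd ℂ) s3, (starRingEnd ℂ) s2;
     -((starRingEnd ℂ) s2), -s3, (starRingEnd ℂ) s1, 0;
     (starRingEnd ℂ) s3, -s2, 0, (starRingEnd ℂ) s1]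

theorem rate34Code_eq_smul_rate34Design (s1 s2 s3 : ℂ) :
    rate34Code s1 s2 s3 = (((Real.sqrt 3)⁻¹ : ℝ) : ℂ) • rate34Design s1 s2 s3 := by
  rw [rate34Code, rate34Design, ofReal_inv]

theorem rate34Design_mul_conjTranspose (s1 s2 s3 : ℂ) :
    rate34Design s1 s2 s3 * (rate34Design s1 s2 s3)ᴴ
      = ((‖s1‖ ^ 2 + ‖s2‖ ^ 2 + ‖s3‖ ^ 2 : ℝ) : ℂ) • 1 := by
  have hsum : ((‖s1‖ ^ 2 + ‖s2‖ ^ 2 + ‖s3‖ ^ 2 : ℝ) : ℂ)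
      = s1 * starRingEnd ℂ s1 + s2 * starRingEnd ℂ s2 + s3 * starRingEnd ℂ s3 := by
    push_cast
    simp only [mul_conj, normSq_eq_norm_sq, ofReal_pow]
  rw [hsum]
  ext i j
  fin_cases i <;> fin_cases j <;>
    simp [rate34Design, mul_apply, Fin.sum_univ_four, one_apply] <;> ring

/-- The rate-3/4 code matrix satisfies `X Xᴴ = ((|s_1|² + |s_2|² + |s_3|²)/3) I₄`; in
particular, if `|s_1| = |s_2| = |s_3| = 1` then `X` is unitary. -/
theorem rate34Code_mul_conjTranspose (s1 s2 s3 : ℂ) :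
    rate34Code s1 s2 s3 * (rate34Code s1 s2 s3)ᴴ
        = ((((‖s1‖ ^ 2 + ‖s2‖ ^ 2 + ‖s3‖ ^ 2) / 3 : ℝ)) : ℂ) • 1
      ∧ (‖s1‖ = 1 → ‖s2‖ = 1 → ‖s3‖ = 1 →
          rate34Code s1 s2 s3 ∈ Matrix.unitaryGroup (Fin 4) ℂ) := by
  have hgram : rate34Code s1 s2 s3 * (rate34Code s1 s2 s3)ᴴ
      = ((((‖s1‖ ^ 2 + ‖s2‖ ^ 2 + ‖s3‖ ^ 2) / 3 : ℝ)) : ℂ) • 1 := by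
    rw [rate34Code_eq_smul_rate34Design, ofReal_smul_mul_conjTranspose,
      rate34Design_mul_conjTranspose, smul_smul, ← ofReal_mul, inv_pow,
      Real.sq_sqrt (by norm_num : (0 : ℝ) ≤ 3), inv_mul_eq_div]
  refine ⟨hgram, fun h1 h2 h3 => ?_⟩
  rw [mem_unitaryGroup_iff, star_eq_conjTranspose, hgram, h1, h2, h3]
  norm_num
end

section
/- Let {A_n}_{n=1}^{n_s}, {B_n}_{n=1}^{n_s} be real L×L matrices forming an amicable orthogonal design, let s̄_1, s̃_1, …, s̄_{n_s}, s̃_{n_s} be real numbers, and set X = (1/√n_s) Σ_{n′=1}^{n_s} ( s̄_{n′} A_{n′} + i s̃_{n′} B_{n′} ). Then for every complex L×L Hermitian matrix H and every index n, Re( tr( A_n · X^H · H ) ) = (s̄_n/√n_s) · Re( tr(H) ). -/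
open Matrix Complex

/-- An amicable orthogonal design: real `L × L` matrices `A n`, `B n` (`n = 1, …, n_s`)
satisfying conditions (34) of the paper. -/
def IsAmicableDesign {L ns : ℕ} (A B : Fin ns → Matrix (Fin L) (Fin L) ℝ) : Prop :=
  (∀ n, A n * (A n)ᵀ = 1) ∧ (∀ n, B n * (B n)ᵀ = 1) ∧
  (∀ n n', n ≠ n' → A n * (A n')ᵀ = -(A n' * (A n)ᵀ)) ∧
  (∀ n n', n ≠ n' → B n * (B n')ᵀ = -(B n' * (B n)ᵀ)) ∧
  (∀ n n', A n * (B n')ᵀ = B n' * (A n)ᵀ)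

/-- The space-time code matrix `X = (1/√n_s) Σ_n (s̄_n A_n + i s̃_n B_n)`, with the real
matrices viewed as complex entrywise. -/
noncomputable def codeX {L ns : ℕ} (A B : Fin ns → Matrix (Fin L) (Fin L) ℝ)
    (sbar stil : Fin ns → ℝ) : Matrix (Fin L) (Fin L) ℂ :=
  ((Real.sqrt ns : ℂ))⁻¹ •
    ∑ n, ((sbar n : ℂ) • (A n).map Complex.ofReal
      + ((stil n : ℂ) * Complex.I) • (B n).map Complex.ofReal)

lemma mapofReal_mul {L : ℕ} (M N : Matrix (Fin L) (Fin L) ℝ) :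
    (M * N).map Complex.ofReal = M.map Complex.ofReal * N.map Complex.ofReal := by
  ext i j
  simp [Matrix.mul_apply]

lemma conjTranspose_mapofReal {L : ℕ} (M : Matrix (Fin L) (Fin L) ℝ) :
    (M.map Complex.ofReal)ᴴ = Mᵀ.map Complex.ofReal := by
  ext i j
  simp

lemma conj_trace_mapofReal_mul {L : ℕ} (M : Matrix (Fin L) (Fin L) ℝ)
    (H : Matrix (Fin L) (Fin L) ℂ) (hH : Hᴴ = H) :
    (starRingEnd ℂ) (Matrix.trace (M.map Complex.ofReal * H)) =
      Matrix.trace ((Mᵀ).map Complex.ofReal * H) := by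
  have h1 : (M.map Complex.ofReal * H)ᴴ = H * (Mᵀ).map Complex.ofReal := by
    rw [conjTranspose_mul, hH, conjTranspose_mapofReal]
  calc (starRingEnd ℂ) (Matrix.trace (M.map Complex.ofReal * H))
      = Matrix.trace ((M.map Complex.ofReal * H)ᴴ) := by
        rw [Matrix.trace_conjTranspose]; rfl
    _ = Matrix.trace (H * (Mᵀ).map Complex.ofReal) := by rw [h1]
    _ = _ := Matrix.trace_mul_comm _ _

lemma re_trace_skew {L : ℕ} (M : Matrix (Fin L) (Fin L) ℝ) (hM : Mᵀ = -M)
    (H : Matrix (Fin L) (Fin L) ℂ) (hH : Hᴴ = H) :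
    (Matrix.trace (M.map Complex.ofReal * H)).re = 0 := by
  have h := conj_trace_mapofReal_mul M H hH
  rw [hM] at h
  have h2 : ((-M).map Complex.ofReal) = -(M.map Complex.ofReal) := by
    ext i j; simp
  rw [h2, Matrix.neg_mul, Matrix.trace_neg] at h
  have hadd := Complex.add_conj (Matrix.trace (M.map Complex.ofReal * H))
  rw [h] at hadd
  have h3 : ((2 * (Matrix.trace (M.map Complex.ofReal * H)).re : ℝ) : ℂ) = 0 := by
    rw [← hadd]; ring
  have h4 : 2 * (Matrix.trace (M.map Complex.ofReal * H)).re = 0 := by exact_mod_cast h3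
  linarith

lemma im_trace_symm {L : ℕ} (M : Matrix (Fin L) (Fin L) ℝ) (hM : Mᵀ = M)
    (H : Matrix (Fin L) (Fin L) ℂ) (hH : Hᴴ = H) :
    (Matrix.trace (M.map Complex.ofReal * H)).im = 0 := by
  have h := conj_trace_mapofReal_mul M H hH
  rw [hM] at h
  exact Complex.conj_eq_iff_im.mp h
/-- Lemma 1 of the paper: for an amicable orthogonal design and any Hermitian `H`,
`Re(tr(A_n Xᴴ H)) = (s̄_n/√n_s) Re(tr H)`. -/
theorem re_trace_An_codeX_conjTranspose_hermitian {L ns : ℕ}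
    (A B : Fin ns → Matrix (Fin L) (Fin L) ℝ) (hAB : IsAmicableDesign A B)
    (sbar stil : Fin ns → ℝ)
    (H : Matrix (Fin L) (Fin L) ℂ) (hH : Hᴴ = H) (n : Fin ns) :
    (Matrix.trace ((A n).map Complex.ofReal * (codeX A B sbar stil)ᴴ * H)).re
      = (sbar n / Real.sqrt ns) * (Matrix.trace H).re := by
  obtain ⟨hA, hB, hAA, hBB, hABc⟩ := hAB
  -- rewrite the trace as a sum
  have key : Matrix.trace ((A n).map Complex.ofReal * (codeX A B sbar stil)ᴴ * H)
      = ((Real.sqrt ns : ℂ))⁻¹ *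
        ∑ k, ((sbar k : ℂ) * Matrix.trace (((A n * (A k)ᵀ).map Complex.ofReal) * H)
          - (stil k : ℂ) * Complex.I * Matrix.trace (((A n * (B k)ᵀ).map Complex.ofReal) * H)) := by
    unfold codeX
    rw [Matrix.conjTranspose_smul]
    have hstar : star (((Real.sqrt ns : ℝ) : ℂ))⁻¹ = ((Real.sqrt ns : ℝ) : ℂ)⁻¹ := by
      simp
    rw [hstar]
    rw [Matrix.mul_smul, Matrix.smul_mul, Matrix.trace_smul, smul_eq_mul]
    congr 1
    rw [Matrix.conjTranspose_sum, Matrix.mul_sum, Matrix.sum_mul, Matrix.trace_sum]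
    refine Finset.sum_congr rfl fun k _ => ?_
    rw [Matrix.conjTranspose_add, Matrix.conjTranspose_smul, Matrix.conjTranspose_smul,
      conjTranspose_mapofReal, conjTranspose_mapofReal, Matrix.mul_add, Matrix.add_mul,
      Matrix.trace_add, mapofReal_mul, mapofReal_mul]
    rw [Matrix.mul_smul, Matrix.smul_mul, Matrix.trace_smul,
      Matrix.mul_smul, Matrix.smul_mul, Matrix.trace_smul]
    simp only [smul_eq_mul, Matrix.mul_assoc]
    have c1 : star ((sbar k : ℝ) : ℂ) = ((sbar k : ℝ) : ℂ) := by simp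
    have c2 : star (((stil k : ℝ) : ℂ) * Complex.I) = -(((stil k : ℝ) : ℂ) * Complex.I) := by
      simp [mul_comm]
    rw [c1, c2]
    ring
  rw [key]
  -- compute the real part of each summand
  have hre : ∀ k, ((sbar k : ℂ) * Matrix.trace (((A n * (A k)ᵀ).map Complex.ofReal) * H)
          - (stil k : ℂ) * Complex.I * Matrix.trace (((A n * (B k)ᵀ).map Complex.ofReal) * H)).re
      = if k = n then sbar n * (Matrix.trace H).re else 0 := by
    intro k
    have hsymm : (A n * (B k)ᵀ)ᵀ = A n * (B k)ᵀ := by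
      rw [Matrix.transpose_mul, Matrix.transpose_transpose, ← hABc n k]
    have him := im_trace_symm _ hsymm H hH
    rcases eq_or_ne k n with rfl | hk
    · rw [hA k]
      have h1 : ((1 : Matrix (Fin L) (Fin L) ℝ).map Complex.ofReal) = 1 := by
        ext i j; simp [Matrix.one_apply]; split <;> simp
      rw [h1, Matrix.one_mul]
      simp [Complex.sub_re, Complex.mul_re, him, if_pos rfl]
    · have hskew : (A n * (A k)ᵀ)ᵀ = -(A n * (A k)ᵀ) := by
        calc (A n * (A k)ᵀ)ᵀ = A k * (A n)ᵀ := by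
              rw [Matrix.transpose_mul, Matrix.transpose_transpose]
          _ = -(A n * (A k)ᵀ) := hAA k n hk
      have hre0 := re_trace_skew _ hskew H hH
      rw [if_neg hk]
      simp [Complex.sub_re, Complex.mul_re, him, hre0]
  rw [← Complex.ofReal_inv, Complex.re_ofReal_mul, Complex.re_sum]
  simp only [hre]
  rw [Finset.sum_ite_eq' Finset.univ n (fun _ => sbar n * (Matrix.trace H).re)]
  simp only [Finset.mem_univ, if_true]
  rw [div_eq_mul_inv]
  ring
end

section
/- Let {A_n}_{n=1}^{n_s}, {B_n}_{n=1}^{n_s} be real L×L matrices forming an amicable orthogonal design, let s̄_1, s̃_1, …, s̄_{n_s}, s̃_{n_s} be real numbers, and set X = (1/√n_s) Σ_{n′=1}^{n_s} ( s̄_{n′} A_{n′} + i s̃_{n′} B_{n′} ). Let C be a complex L×L matrix with C C^H = I_L, let m : {1,…,J} → {1,…,L} be injective, let g_1, …, g_J be complex numbers, and let d = Σ_{j=1}^J g_j · (row m(j) of C) ∈ ℂ^{1×L}. Then for every index n, Re( tr( A_n · X^H · d^H d ) ) = (s̄_n/√n_s) · Σ_{j=1}^J |g_j|². In particular this quantity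 is unchanged when each g_j is replaced by e^{iφ_j} g_j for arbitrary real phases φ_j. -/
open Matrix Complex

/-- The (noise-free) desired signal row vector `d = Σ_j g_j · (row m(j) of C)`. -/
noncomputable def desiredRow {L J : ℕ} (C : Matrix (Fin L) (Fin L) ℂ)
    (m : Fin J → Fin L) (g : Fin J → ℂ) : Fin L → ℂ :=
  fun l => ∑ j, g j * C (m j) l

/-- The rank-one Hermitian outer product `dᴴ d` of a row vector `d`. -/
noncomputable def outerRow {L : ℕ} (d : Fin L → ℂ) : Matrix (Fin L) (Fin L) ℂ :=
  Matrix.of fun l l' => (starRingEnd ℂ) (d l) * d l'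

/-! With `M = A_n Xᴴ`, the amicable relations make the Hermitian part of `M` scalar:
`M + Mᴴ = (2 s̄_n / √n_s) I`, the `B`-terms cancelling because `A_n B_{n'}ᵀ = B_{n'} A_nᵀ`.
Since `dᴴd` is Hermitian, `Re tr(M dᴴd) = ½ tr((M + Mᴴ) dᴴd) = (s̄_n / √n_s) ‖d‖²`. Finally
`d = g R` with `R` the rows `m(j)` of `C`, which are orthonormal, so `‖d‖² = ‖g‖²`. -/

lemma Matrix.mul_transpose_sum_smul_add {ι L R : Type*} [Fintype ι] [Fintype L] [DecidableEq L]
    [CommRing R] {A : ι → Matrix L L R} (hA : ∀ n, A n * (A n)ᵀ = 1)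
    (hAA : ∀ n n', n ≠ n' → A n * (A n')ᵀ = -(A n' * (A n)ᵀ)) (s : ι → R) (n : ι) :
    A n * (∑ n', s n' • A n')ᵀ + (∑ n', s n' • A n') * (A n)ᵀ = (2 * s n) • 1 := by
  have hterm : ∀ n', A n * (s n' • A n')ᵀ + (s n' • A n') * (A n)ᵀ
      = s n' • (A n * (A n')ᵀ + A n' * (A n)ᵀ) := fun n' => by
    rw [transpose_smul, Matrix.mul_smul, Matrix.smul_mul, smul_add]
  rw [transpose_sum, Finset.mul_sum, Finset.sum_mul, ← Finset.sum_add_distrib,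
    Finset.sum_congr rfl fun n' _ => hterm n', Finset.sum_eq_single n]
  · rw [hA]
    module
  · intro n' _ hn'
    rw [hAA n n' hn'.symm, neg_add_cancel, smul_zero]
  · simp

lemma Matrix.mul_transpose_sum_smul_comm {ι L R : Type*} [Fintype ι] [Fintype L] [CommRing R]
    {M : Matrix L L R} {B : ι → Matrix L L R} (hMB : ∀ n, M * (B n)ᵀ = B n * Mᵀ) (t : ι → R) :
    M * (∑ n, t n • B n)ᵀ = (∑ n, t n • B n) * Mᵀ := by
  simp only [transpose_sum, transpose_smul, Finset.mul_sum, Finset.sum_mul, Matrix.mul_smul,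
    Matrix.smul_mul, hMB]

section Complexification

variable {ι : Type*}

lemma Matrix.conjTranspose_map_ofReal {κ : Type*} (M : Matrix ι κ ℝ) :
    (M.map ofReal)ᴴ = Mᵀ.map ofReal := by
  ext i j
  simp

variable [Fintype ι]

lemma Matrix.map_ofReal_mul {κ μ : Type*} (M : Matrix κ ι ℝ) (N : Matrix ι μ ℝ) :
    (M * N).map ofReal = M.map ofReal * N.map ofReal :=
  Matrix.map_mul (f := Complex.ofRealHom)

lemma Matrix.map_ofReal_mul_add_conjTranspose [DecidableEq ι] {A P Q : Matrix ι ι ℝ} {c : ℝ}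
    (hP : A * Pᵀ + P * Aᵀ = c • 1) (hQ : A * Qᵀ = Q * Aᵀ) :
    A.map ofReal * (P.map ofReal + I • Q.map ofReal)ᴴ
        + (A.map ofReal * (P.map ofReal + I • Q.map ofReal)ᴴ)ᴴ = (c : ℂ) • 1 := by
  have hc : (c • (1 : Matrix ι ι ℝ)).map ofReal = (c : ℂ) • 1 := by
    ext i j
    by_cases h : i = j <;> simp [h]
  rw [← hc, ← hP, conjTranspose_add, conjTranspose_smul, conjTranspose_map_ofReal,
    conjTranspose_map_ofReal, Matrix.mul_add, Matrix.mul_smul, ← map_ofReal_mul,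
    ← map_ofReal_mul, conjTranspose_add, conjTranspose_smul, conjTranspose_map_ofReal,
    conjTranspose_map_ofReal, transpose_mul, transpose_mul, transpose_transpose,
    transpose_transpose, hQ, star_star, Complex.star_def, Complex.conj_I,
    Matrix.map_add _ Complex.ofReal_add, neg_smul]
  abel

end Complexification

lemma Matrix.re_trace_mul_of_add_conjTranspose_eq {𝕜 ι : Type*} [RCLike 𝕜] [Fintype ι]
    [DecidableEq ι] {M O : Matrix ι ι 𝕜} (hO : O.IsHermitian) {c : ℝ}
    (hM : M + Mᴴ = ((2 * c : ℝ) : 𝕜) • 1) :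
    RCLike.re (trace (M * O)) = c * RCLike.re (trace O) := by
  have hstar : trace (Mᴴ * O) = star (trace (M * O)) := by
    rw [← trace_conjTranspose, conjTranspose_mul, hO.eq, trace_mul_comm]
  have h := congrArg (fun N => RCLike.re (trace (N * O))) hM
  simp only [add_mul, trace_add, hstar, RCLike.star_def, RCLike.add_conj, smul_mul, one_mul,
    trace_smul, smul_eq_mul, RCLike.re_ofReal_mul] at h
  rw [← RCLike.ofReal_ofNat, RCLike.re_ofReal_mul, RCLike.ofReal_re] at h
  linarith

lemma Matrix.star_vecMul_dotProduct_vecMul {α m n : Type*} [CommSemiring α] [StarRing α]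
    [Fintype m] [Fintype n] [DecidableEq m] {R : Matrix m n α} (hR : R * Rᴴ = 1) (v : m → α) :
    star (v ᵥ* R) ⬝ᵥ v ᵥ* R = star v ⬝ᵥ v := by
  rw [star_vecMul, dotProduct_comm, dotProduct_mulVec, vecMul_vecMul, hR, vecMul_one,
    dotProduct_comm]

lemma codeX_eq {L ns : ℕ} (A B : Fin ns → Matrix (Fin L) (Fin L) ℝ) (sbar stil : Fin ns → ℝ) :
    codeX A B sbar stil = ((Real.sqrt ns)⁻¹ • ∑ n, sbar n • A n).map ofReal
      + I • ((Real.sqrt ns)⁻¹ • ∑ n, stil n • B n).map ofReal := by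
  ext i j
  simp only [codeX, coe_smul, Finset.sum_add_distrib, Matrix.smul_apply, Matrix.add_apply,
    Matrix.sum_apply, map_apply, real_smul, smul_eq_mul, mul_add, Finset.mul_sum, ofReal_sum,
    ofReal_mul, ofReal_inv, add_right_inj]
  exact Finset.sum_congr rfl fun _ _ => by ring

lemma mul_add_conjTranspose_codeX {L ns : ℕ} {A B : Fin ns → Matrix (Fin L) (Fin L) ℝ}
    (hA : ∀ n, A n * (A n)ᵀ = 1) (hAA : ∀ n n', n ≠ n' → A n * (A n')ᵀ = -(A n' * (A n)ᵀ))
    (hAB : ∀ n n', A n * (B n')ᵀ = B n' * (A n)ᵀ) (sbar stil : Fin ns → ℝ) (n : Fin ns) :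
    (A n).map ofReal * (codeX A B sbar stil)ᴴ + ((A n).map ofReal * (codeX A B sbar stil)ᴴ)ᴴ
      = ((2 * (sbar n / Real.sqrt ns) : ℝ) : ℂ) • 1 := by
  rw [codeX_eq]
  refine map_ofReal_mul_add_conjTranspose ?_ ?_
  · rw [transpose_smul, Matrix.mul_smul, Matrix.smul_mul, ← smul_add,
      mul_transpose_sum_smul_add hA hAA, smul_smul]
    congr 1
    ring
  · rw [transpose_smul, Matrix.mul_smul, Matrix.smul_mul, mul_transpose_sum_smul_comm (hAB n)]

lemma outerRow_isHermitian {L : ℕ} (d : Fin L → ℂ) : (outerRow d).IsHermitian := by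
  ext i j
  simp [outerRow, mul_comm]

lemma re_trace_outerRow_desiredRow {L J : ℕ} {C : Matrix (Fin L) (Fin L) ℂ} (hC : C * Cᴴ = 1)
    {m : Fin J → Fin L} (hm : Function.Injective m) (g : Fin J → ℂ) :
    (trace (outerRow (desiredRow C m g))).re = ∑ j, ‖g j‖ ^ 2 := by
  have hrows : C.submatrix m id * (C.submatrix m id)ᴴ = 1 := by
    rw [conjTranspose_submatrix, ← submatrix_mul _ _ _ _ _ Function.bijective_id, hC,
      submatrix_one _ hm]
  have htrace : trace (outerRow (desiredRow C m g))
      = star (g ᵥ* C.submatrix m id) ⬝ᵥ g ᵥ* C.submatrix m id := rfl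
  rw [htrace, star_vecMul_dotProduct_vecMul hrows]
  simp [dotProduct, Complex.conj_mul', ← Complex.ofReal_pow]

/-- The desired-signal component of the differential detection statistic depends only on
the squared magnitudes of the effective channels: `Re(tr(A_n Xᴴ dᴴd)) =
(s̄_n/√n_s) Σ_j |g_j|²`, and in particular it is unchanged when each `g_j` is replaced by
`e^{iφ_j} g_j`. -/
theorem re_trace_detection_statistic {L ns J : ℕ}
    (A B : Fin ns → Matrix (Fin L) (Fin L) ℝ) (hAB : IsAmicableDesign A B)
    (sbar stil : Fin ns → ℝ)
    (C : Matrix (Fin L) (Fin L) ℂ) (hC : C * Cᴴ = 1)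
    (m : Fin J → Fin L) (hm : Function.Injective m)
    (g : Fin J → ℂ) (n : Fin ns) :
    (Matrix.trace ((A n).map Complex.ofReal * (codeX A B sbar stil)ᴴ
          * outerRow (desiredRow C m g))).re
        = (sbar n / Real.sqrt ns) * ∑ j, ‖g j‖ ^ 2
      ∧ ∀ φ : Fin J → ℝ,
          (Matrix.trace ((A n).map Complex.ofReal * (codeX A B sbar stil)ᴴ
              * outerRow (desiredRow C m
                  (fun j => Complex.exp ((φ j : ℂ) * Complex.I) * g j)))).re
            = (Matrix.trace ((A n).map Complex.ofReal * (codeX A B sbar stil)ᴴ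
                * outerRow (desiredRow C m g))).re := by
  obtain ⟨hA, -, hAA, -, hAB⟩ := hAB
  have key : ∀ g : Fin J → ℂ, (trace ((A n).map ofReal * (codeX A B sbar stil)ᴴ
      * outerRow (desiredRow C m g))).re = sbar n / Real.sqrt ns * ∑ j, ‖g j‖ ^ 2 := fun g =>
    (Matrix.re_trace_mul_of_add_conjTranspose_eq (outerRow_isHermitian _)
      (mul_add_conjTranspose_codeX hA hAA hAB sbar stil n)).trans
      (congrArg _ (re_trace_outerRow_desiredRow hC hm g))
  refine ⟨key g, fun φ => ?_⟩
  simp only [key, norm_mul, norm_exp_ofReal_mul_I, one_mul]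
end
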